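/- Let α ∈ (0,1), q ∈ (1,∞), μ ∈ (−1,q−1), and suppose α > 1/q and α > (1+μ)/q. Then for f ∈ L_q((0,T), t^μ dt) and u(t) = I^α f(t), one has the pointwise estimate |u(t)| ≤ N t^{α−(1+μ)/q} (∫₀ᵗ |f(s)|^q s^μ ds)^{1/q} for all t ∈ (0,T), with N = N(α,q,μ). In particular u(t) → 0 as t → 0+. -/

import Mathlib

/-!
Hölder's inequality for the weight `s ^ μ` splits `(t - s) ^ (α - 1) * f s` as
`((t - s) ^ (α - 1) * s ^ (-μ / q)) * (f s * s ^ (μ / q))`. With `q' = q / (q - 1)`, the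
`q'`-th power of the first factor integrates, after the substitution `s = t x`, to
`t ^ (q' * (α - (1 + μ) / q))` times a Beta integral, which is finite exactly when
`(α - 1) q' > -1` and `μ q' / q < 1`, i.e. `α > 1 / q` and `μ < q - 1`. Since
`α > (1 + μ) / q`, the power of `t` is positive, so the estimate forces
`riemannLiouville α f t` (the paper's `I^α f(t)`) to tend to `0` as `t → 0+`.
-/

open MeasureTheory Set Filter Topology

theorem integrableOn_one_sub_rpow_mul_rpow {b c : ℝ} (hb : -1 < b) (hc : -1 < c) :
    IntegrableOn (fun x : ℝ => (1 - x) ^ b * x ^ c) (Ioo 0 1) := by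
  have hconv := Complex.betaIntegral_convergent (u := c + 1) (v := b + 1)
    (by simp; linarith) (by simp; linarith)
  refine (IntegrableOn.mono_set hconv.1.norm Ioo_subset_Ioc_self).congr_fun (fun x hx => ?_)
    measurableSet_Ioo
  have hx1 : (0:ℝ) < 1 - x := by linarith [hx.2]
  beta_reduce
  rw [norm_mul, add_sub_cancel_right, add_sub_cancel_right, ← Complex.ofReal_one,
    ← Complex.ofReal_sub, Complex.norm_cpow_eq_rpow_re_of_pos hx.1,
    Complex.norm_cpow_eq_rpow_re_of_pos hx1, Complex.ofReal_re, Complex.ofReal_re, mul_comm]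

theorem sub_rpow_mul_rpow_eq {b c s t : ℝ} (ht : 0 < t) (hs : 0 ≤ s) (hst : s ≤ t) :
    (t - s) ^ b * s ^ c = t ^ (b + c) * ((1 - s / t) ^ b * (s / t) ^ c) := by
  rw [one_sub_div ht.ne', Real.div_rpow (by linarith) ht.le, Real.div_rpow hs ht.le,
    Real.rpow_add ht]
  field_simp

theorem intervalIntegral_sub_rpow_mul_rpow (b c : ℝ) {t : ℝ} (ht : 0 < t) :
    ∫ s in 0..t, (t - s) ^ b * s ^ c = t ^ (b + c + 1) * ∫ x in 0..1, (1 - x) ^ b * x ^ c := by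
  rw [intervalIntegral.integral_congr (g := fun s => t ^ (b + c) * ((1 - s / t) ^ b * (s / t) ^ c))
      fun s hs => ?_, intervalIntegral.integral_const_mul,
    intervalIntegral.integral_comp_div (fun x => (1 - x) ^ b * x ^ c) ht.ne', zero_div,
    div_self ht.ne', smul_eq_mul, Real.rpow_add_one ht.ne']
  · ring
  rw [uIcc_of_le ht.le] at hs
  exact sub_rpow_mul_rpow_eq ht hs.1 hs.2

theorem intervalIntegral_one_sub_rpow_mul_rpow_nonneg (b c : ℝ) :
    0 ≤ ∫ x in 0..1, (1 - x) ^ b * x ^ c :=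
  intervalIntegral.integral_nonneg zero_le_one fun x hx =>
    mul_nonneg (Real.rpow_nonneg (by linarith [hx.2]) _) (Real.rpow_nonneg hx.1 _)

theorem intervalIntegrable_sub_rpow_mul_rpow {b c t : ℝ} (hb : -1 < b) (hc : -1 < c)
    (ht : 0 < t) : IntervalIntegrable (fun s => (t - s) ^ b * s ^ c) volume 0 t := by
  have h01 : IntervalIntegrable (fun x : ℝ => (1 - x) ^ b * x ^ c) volume 0 1 := by
    rw [intervalIntegrable_iff_integrableOn_Ioo_of_le zero_le_one]
    exact integrableOn_one_sub_rpow_mul_rpow hb hc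
  have := (h01.comp_mul_left (c := t⁻¹)).const_mul (t ^ (b + c))
  rw [zero_div, one_div, inv_inv] at this
  refine this.congr_uIoo fun s hs => ?_
  rw [uIoo_of_le ht.le] at hs
  rw [sub_rpow_mul_rpow_eq ht hs.1.le hs.2.le]
  simp only [inv_mul_eq_div]

theorem abs_integral_mul_le_weighted_Lp_mul_Lq {X : Type*} [MeasurableSpace X] {ν : Measure X}
    {p q : ℝ} (hpq : p.HolderConjugate q) {g f w : X → ℝ} (hg : AEMeasurable g ν) (hf : AEMeasurable f ν)
    (hwm : AEMeasurable w ν) (hw : ∀ᵐ x ∂ν, 0 < w x)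
    (hgw : Integrable (fun x => |g x| ^ p * w x ^ (-(p / q))) ν)
    (hfw : Integrable (fun x => |f x| ^ q * w x) ν) :
    |∫ x, g x * f x ∂ν| ≤
      (∫ x, |g x| ^ p * w x ^ (-(p / q)) ∂ν) ^ (1 / p) * (∫ x, |f x| ^ q * w x ∂ν) ^ (1 / q) := by
  set G : X → ℝ := fun x => g x * w x ^ (-(1 / q))
  set H : X → ℝ := fun x => f x * w x ^ (1 / q)
  have hGp : (fun x => ‖G x‖ ^ p) =ᵐ[ν] fun x => |g x| ^ p * w x ^ (-(p / q)) := by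
    filter_upwards [hw] with x hx
    rw [Real.norm_eq_abs, abs_mul, abs_of_pos (Real.rpow_pos_of_pos hx _),
      Real.mul_rpow (abs_nonneg _) (Real.rpow_nonneg hx.le _), ← Real.rpow_mul hx.le]
    ring_nf
  have hHq : (fun x => ‖H x‖ ^ q) =ᵐ[ν] fun x => |f x| ^ q * w x := by
    filter_upwards [hw] with x hx
    rw [Real.norm_eq_abs, abs_mul, abs_of_pos (Real.rpow_pos_of_pos hx _),
      Real.mul_rpow (abs_nonneg _) (Real.rpow_nonneg hx.le _), ← Real.rpow_mul hx.le,
      one_div_mul_cancel hpq.symm.ne_zero, Real.rpow_one]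
  have hGH : (fun x => |g x * f x|) =ᵐ[ν] fun x => ‖G x‖ * ‖H x‖ := by
    filter_upwards [hw] with x hx
    rw [Real.norm_eq_abs, Real.norm_eq_abs, ← abs_mul, mul_mul_mul_comm, ← Real.rpow_add hx,
      neg_add_cancel, Real.rpow_zero, mul_one]
  have hG : MemLp G (ENNReal.ofReal p) ν := by
    rw [← integrable_norm_rpow_iff (by fun_prop) (by simp [hpq.pos]) ENNReal.ofReal_ne_top,
      ENNReal.toReal_ofReal hpq.nonneg]
    exact hgw.congr hGp.symm
  have hH : MemLp H (ENNReal.ofReal q) ν := by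
    rw [← integrable_norm_rpow_iff (by fun_prop) (by simp [hpq.symm.pos]) ENNReal.ofReal_ne_top,
      ENNReal.toReal_ofReal hpq.symm.nonneg]
    exact hfw.congr hHq.symm
  calc |∫ x, g x * f x ∂ν| ≤ ∫ x, |g x * f x| ∂ν := abs_integral_le_integral_abs
    _ = ∫ x, ‖G x‖ * ‖H x‖ ∂ν := integral_congr_ae hGH
    _ ≤ (∫ x, ‖G x‖ ^ p ∂ν) ^ (1 / p) * (∫ x, ‖H x‖ ^ q ∂ν) ^ (1 / q) :=
      integral_mul_norm_le_Lp_mul_Lq hpq hG hH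
    _ = _ := by rw [integral_congr_ae hGp, integral_congr_ae hHq]

theorem abs_integral_sub_rpow_mul_le {α q μ p t : ℝ} (hpq : p.HolderConjugate q)
    (hb : -1 < (α - 1) * p) (hc : -1 < μ * -(p / q)) (ht : 0 < t) {f : ℝ → ℝ}
    (hf : AEMeasurable f (volume.restrict (Ioo 0 t)))
    (hfw : IntegrableOn (fun s => |f s| ^ q * s ^ μ) (Ioo 0 t)) :
    |∫ s in Ioo 0 t, (t - s) ^ (α - 1) * f s| ≤
      (∫ x in 0..1, (1 - x) ^ ((α - 1) * p) * x ^ (μ * -(p / q))) ^ (1 / p) *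
        t ^ (α - (1 + μ) / q) * (∫ s in Ioo 0 t, |f s| ^ q * s ^ μ) ^ (1 / q) := by
  set b := (α - 1) * p
  set c := μ * -(p / q)
  have hkernel : EqOn (fun s => |(t - s) ^ (α - 1)| ^ p * (s ^ μ) ^ (-(p / q)))
      (fun s => (t - s) ^ b * s ^ c) (Ioo 0 t) := fun s hs => by
    have hts : 0 ≤ t - s := by linarith [hs.2]
    simp only
    rw [abs_of_nonneg (Real.rpow_nonneg hts _), ← Real.rpow_mul hts, ← Real.rpow_mul hs.1.le]
  have hkernel_int : IntegrableOn (fun s => |(t - s) ^ (α - 1)| ^ p * (s ^ μ) ^ (-(p / q)))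
      (Ioo 0 t) :=
    ((intervalIntegrable_iff_integrableOn_Ioo_of_le ht.le).1
      (intervalIntegrable_sub_rpow_mul_rpow hb hc ht)).congr_fun hkernel.symm measurableSet_Ioo
  have hkernel_eq : ∫ s in Ioo 0 t, |(t - s) ^ (α - 1)| ^ p * (s ^ μ) ^ (-(p / q)) =
      t ^ (b + c + 1) * ∫ x in 0..1, (1 - x) ^ b * x ^ c := by
    rw [setIntegral_congr_fun measurableSet_Ioo hkernel, ← integral_Ioc_eq_integral_Ioo,
      ← intervalIntegral.integral_of_le ht.le, intervalIntegral_sub_rpow_mul_rpow b c ht]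
  have hexp : (b + c + 1) * (1 / p) = α - (1 + μ) / q := by
    have hp := hpq.ne_zero
    calc (b + c + 1) * (1 / p) = α - 1 - μ / q + p⁻¹ := by field_simp; ring
      _ = α - (1 + μ) / q := by rw [← hpq.symm.one_sub_inv]; ring
  have hw : ∀ᵐ s ∂volume.restrict (Ioo 0 t), 0 < s ^ μ := by
    filter_upwards [ae_restrict_mem measurableSet_Ioo] with s hs
    exact Real.rpow_pos_of_pos hs.1 μ
  calc |∫ s in Ioo 0 t, (t - s) ^ (α - 1) * f s|
      ≤ (∫ s in Ioo 0 t, |(t - s) ^ (α - 1)| ^ p * (s ^ μ) ^ (-(p / q))) ^ (1 / p) *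
          (∫ s in Ioo 0 t, |f s| ^ q * s ^ μ) ^ (1 / q) :=
        abs_integral_mul_le_weighted_Lp_mul_Lq hpq (by fun_prop) hf (by fun_prop) hw
          hkernel_int hfw
    _ = _ := by
        rw [hkernel_eq, Real.mul_rpow (Real.rpow_nonneg ht.le _)
          (intervalIntegral_one_sub_rpow_mul_rpow_nonneg b c), ← Real.rpow_mul ht.le, hexp]
        ring

theorem tendsto_nhdsGT_zero_of_abs_le_mul_rpow {u : ℝ → ℝ} {C γ : ℝ} (hγ : 0 < γ)
    (h : ∀ᶠ t in 𝓝[>] 0, |u t| ≤ C * t ^ γ) : Tendsto u (𝓝[>] 0) (𝓝 0) := by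
  have hC : Tendsto (fun t : ℝ => C * t ^ γ) (𝓝[>] 0) (𝓝 0) := by
    have := ((Real.continuousAt_rpow_const 0 γ (Or.inr hγ.le)).tendsto.const_mul C).mono_left
      (nhdsWithin_le_nhds (s := Ioi 0))
    rwa [Real.zero_rpow hγ.ne', mul_zero] at this
  exact squeeze_zero_norm' (by simpa only [Real.norm_eq_abs] using h) hC

theorem setIntegral_Ioo_abs_rpow_mul_rpow_nonneg (f : ℝ → ℝ) (q μ t : ℝ) :
    0 ≤ ∫ s in Ioo 0 t, |f s| ^ q * s ^ μ :=
  setIntegral_nonneg measurableSet_Ioo fun _ hs =>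
    mul_nonneg (Real.rpow_nonneg (abs_nonneg _) _) (Real.rpow_nonneg hs.1.le _)

theorem setIntegral_Ioo_abs_rpow_mul_rpow_mono {f : ℝ → ℝ} {q μ t T : ℝ} (htT : t ≤ T)
    (hfw : IntegrableOn (fun s => |f s| ^ q * s ^ μ) (Ioo 0 T)) :
    ∫ s in Ioo 0 t, |f s| ^ q * s ^ μ ≤ ∫ s in Ioo 0 T, |f s| ^ q * s ^ μ :=
  setIntegral_mono_set hfw
    (ae_restrict_of_forall_mem measurableSet_Ioo fun _ hs =>
      mul_nonneg (Real.rpow_nonneg (abs_nonneg _) _) (Real.rpow_nonneg hs.1.le _))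
    (Ioo_subset_Ioo_right htT).eventuallyLE

noncomputable def riemannLiouville (α : ℝ) (f : ℝ → ℝ) (t : ℝ) : ℝ :=
  (Real.Gamma α)⁻¹ * ∫ s in Ioo 0 t, (t - s) ^ (α - 1) * f s

theorem exists_abs_riemannLiouville_le {α q μ : ℝ} (hq : 1 < q) (hαq : 1 / q < α)
    (hμq : μ < q - 1) :
    ∃ N, 0 < N ∧ ∀ t, 0 < t → ∀ f : ℝ → ℝ, Measurable f →
      IntegrableOn (fun s => |f s| ^ q * s ^ μ) (Ioo 0 t) →
      |riemannLiouville α f t| ≤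
        N * t ^ (α - (1 + μ) / q) * (∫ s in Ioo 0 t, |f s| ^ q * s ^ μ) ^ (1 / q) := by
  set p := q / (q - 1) with hp
  have hpq : p.HolderConjugate q := (Real.HolderConjugate.conjExponent hq).symm
  have hq1 : 0 < q - 1 := by linarith
  have hb : -1 < (α - 1) * p := by
    rw [hp, mul_div_assoc', lt_div_iff₀ hq1]
    nlinarith [(div_lt_iff₀ (by linarith : (0:ℝ) < q)).1 hαq]
  have hc : -1 < μ * -(p / q) := by
    rw [hp, div_div_cancel_left' hpq.symm.ne_zero, mul_neg, ← div_eq_mul_inv,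
      neg_lt_neg_iff, div_lt_one hq1]
    exact hμq
  set B := ∫ x in 0..1, (1 - x) ^ ((α - 1) * p) * x ^ (μ * -(p / q))
  have hB := Real.rpow_nonneg (intervalIntegral_one_sub_rpow_mul_rpow_nonneg
    ((α - 1) * p) (μ * -(p / q))) (1 / p)
  refine ⟨|(Real.Gamma α)⁻¹| * B ^ (1 / p) + 1, by positivity, fun t ht f hf hfw => ?_⟩
  have ht_pow := Real.rpow_nonneg ht.le (α - (1 + μ) / q)
  have hI_pow := Real.rpow_nonneg (setIntegral_Ioo_abs_rpow_mul_rpow_nonneg f q μ t) (1 / q)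
  rw [riemannLiouville, abs_mul]
  calc _ ≤ |(Real.Gamma α)⁻¹| * (B ^ (1 / p) * t ^ (α - (1 + μ) / q) *
          (∫ s in Ioo 0 t, |f s| ^ q * s ^ μ) ^ (1 / q)) := by
        gcongr
        exact abs_integral_sub_rpow_mul_le hpq hb hc ht hf.aemeasurable hfw
    _ ≤ _ := by
        rw [← mul_assoc, ← mul_assoc]
        gcongr
        exact le_add_of_nonneg_right zero_le_one

theorem stmt_6_general (α q μ : ℝ) (hq : 1 < q)
    (hμ : μ ∈ Ioo (-1:ℝ) (q-1)) (h1 : 1/q < α) (h2 : (1+μ)/q < α) :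
    ∃ N : ℝ, 0 < N ∧ ∀ T : ℝ, 0 < T → ∀ f : ℝ → ℝ, Measurable f →
      IntegrableOn (fun s => |f s| ^ q * s ^ μ) (Ioo 0 T) →
      (∀ t ∈ Ioo (0:ℝ) T,
        |(Real.Gamma α)⁻¹ * ∫ s in Ioo (0:ℝ) t, (t - s) ^ (α - 1) * f s| ≤
          N * t ^ (α - (1+μ)/q) * (∫ s in Ioo (0:ℝ) t, |f s| ^ q * s ^ μ) ^ (1/q)) ∧
      Filter.Tendsto
        (fun t => (Real.Gamma α)⁻¹ * ∫ s in Ioo (0:ℝ) t, (t - s) ^ (α - 1) * f s)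
        (nhdsWithin 0 (Ioi 0)) (nhds 0) := by
  obtain ⟨N, hN, hest⟩ := exists_abs_riemannLiouville_le (α := α) hq h1 hμ.2
  refine ⟨N, hN, fun T hT f hf hfw => ?_⟩
  have hest_T : ∀ t ∈ Ioo (0:ℝ) T, |riemannLiouville α f t| ≤
      N * t ^ (α - (1+μ)/q) * (∫ s in Ioo (0:ℝ) t, |f s| ^ q * s ^ μ) ^ (1/q) :=
    fun t ht => hest t ht.1 f hf (hfw.mono_set (Ioo_subset_Ioo_right ht.2.le))
  refine ⟨hest_T, tendsto_nhdsGT_zero_of_abs_le_mul_rpow (u := riemannLiouville α f)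
    (C := N * (∫ s in Ioo (0:ℝ) T, |f s| ^ q * s ^ μ) ^ (1/q)) (sub_pos.2 h2) ?_⟩
  filter_upwards [Ioo_mem_nhdsGT hT] with t ht
  calc _ ≤ _ := hest_T t ht
    _ ≤ N * t ^ (α - (1+μ)/q) * (∫ s in Ioo (0:ℝ) T, |f s| ^ q * s ^ μ) ^ (1/q) :=
        mul_le_mul_of_nonneg_left
          (Real.rpow_le_rpow (setIntegral_Ioo_abs_rpow_mul_rpow_nonneg f q μ t)
            (setIntegral_Ioo_abs_rpow_mul_rpow_mono ht.2.le hfw) (by positivity))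
          (mul_nonneg hN.le (Real.rpow_nonneg ht.1.le _))
    _ = _ := by ring

/-- Pointwise estimate `|I^α f(t)| ≤ N t^{α−(1+μ)/q} (∫₀ᵗ |f|^q s^μ ds)^{1/q}` when
`α > 1/q` and `α > (1+μ)/q`; in particular `I^α f(t) → 0` as `t → 0+`. -/
theorem stmt_6 (α q μ : ℝ) (hα : α ∈ Ioo (0:ℝ) 1) (hq : 1 < q)
    (hμ : μ ∈ Ioo (-1:ℝ) (q-1)) (h1 : 1/q < α) (h2 : (1+μ)/q < α) :
    ∃ N : ℝ, 0 < N ∧ ∀ T : ℝ, 0 < T → ∀ f : ℝ → ℝ, Measurable f →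
      IntegrableOn (fun s => |f s| ^ q * s ^ μ) (Ioo 0 T) →
      (∀ t ∈ Ioo (0:ℝ) T,
        |(Real.Gamma α)⁻¹ * ∫ s in Ioo (0:ℝ) t, (t - s) ^ (α - 1) * f s| ≤
          N * t ^ (α - (1+μ)/q) * (∫ s in Ioo (0:ℝ) t, |f s| ^ q * s ^ μ) ^ (1/q)) ∧
      Filter.Tendsto
        (fun t => (Real.Gamma α)⁻¹ * ∫ s in Ioo (0:ℝ) t, (t - s) ^ (α - 1) * f s)
        (nhdsWithin 0 (Ioi 0)) (nhds 0) :=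
  stmt_6_general α q μ hq hμ h1 h2
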